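/- arXiv:2006.14816 — 2 statements merged into one kernel-verified Lean document; each statement's English description precedes it below -/
import Mathlib

section
/- Let F : [0, t_G) → ℝ be any function with F loc≪ G. Define H(0) arbitrarily, H(t) = F(t) − Ḡ(t−)·(dF/dG)(t) for 0 < t < t_G, H(t_G) arbitrarily in Case A, and H(t_G) = lim_{t↑t_G} F(t) in Case B. Then the pair (F, H) satisfies Condition M. Conversely, if H is any function such that the pair (F, H) satisfies Condition M, then H(t) = F(t) − Ḡ(t−)·(dF/dG)(t) for dG-almost all 0 < t < t_G and, in Case B, H(t_G) = lim_{t↑t_G} F(t). -/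
/-!
Let `ν` be the law of `γ` and `Φ(x) = ∫_(0,x] z dν`, so that `F = F(0) + Φ` on `(0, t_G)`.
Fubini over the triangle `0 < u ≤ x ≤ t` gives `∫_(0,t] Φ dν = ∫_(0,t] z(u) ν[u,t] dν(u)`, and
`ν[u,t] = Ḡ(u-) - Ḡ(t)`, hence `∫_(0,t] (F - Ḡ(·-) z) dν = F(0) Ḡ(0) - F(t) Ḡ(t)`: this is the
identity of Condition M for `H = F - Ḡ(·-) dF/dG`. Conversely, if `(F, H)` satisfies Condition M
then `H` and `F - Ḡ(·-) z` have the same integral over every `(0,x]` with `x < t_G`; on each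
`(0,s]` these intervals form a π-system generating the Borel sets, so the two functions agree
`dG`-a.e. there, and countably many such `s` exhaust `(0, t_G)`.
-/

open MeasureTheory Filter Set Topology
open scoped ENNReal NNReal Classical

noncomputable section

namespace SingleJump

variable {Ω : Type*}

/-- The event `{γ > t}`. -/
def jumpSet (γ : Ω → ℝ≥0∞) (t : ℝ≥0) : Set Ω := {ω | (t : ℝ≥0∞) < γ ω}

/-- The collection `𝒻_t` of the single jump filtration generated by `γ` and the σ-field `m`:
`A ∈ 𝒻_t` iff `A` is `m`-measurable and `A ∩ {γ > t}` is either `∅` or `{γ > t}`. -/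
def jumpColl (m : MeasurableSpace Ω) (γ : Ω → ℝ≥0∞) (t : ℝ≥0) : Set (Set Ω) :=
  {A | MeasurableSet[m] A ∧ (A ∩ jumpSet γ t = ∅ ∨ A ∩ jumpSet γ t = jumpSet γ t)}

/-- `𝒻_t` as a σ-field (the collection `jumpColl` generates itself, see Proposition 1(i)). -/
def jumpσ (m : MeasurableSpace Ω) (γ : Ω → ℝ≥0∞) (t : ℝ≥0) : MeasurableSpace Ω :=
  MeasurableSpace.generateFrom (jumpColl m γ t)

/-- `𝒻_∞ = σ(⋃_{t ∈ ℝ₊} 𝒻_t)`. -/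
def jumpσInf (m : MeasurableSpace Ω) (γ : Ω → ℝ≥0∞) : MeasurableSpace Ω :=
  ⨆ t : ℝ≥0, jumpσ m γ t

/-- A real function on `ℝ≥0` is càdlàg: right-continuous everywhere, finite left limits. -/
def Cadlag (f : ℝ≥0 → ℝ) : Prop :=
  (∀ t, ContinuousWithinAt f (Ici t) t) ∧
    ∀ t : ℝ≥0, 0 < t → ∃ c : ℝ, Tendsto f (𝓝[<] t) (𝓝 c)

/-- The filter of times `t ∈ ℝ≥0` with `t ↑ a` strictly from the left (this is `atTop`
when `a = ∞`). -/
def leftF (a : ℝ≥0∞) : Filter ℝ≥0 := Filter.comap (fun t : ℝ≥0 => (t : ℝ≥0∞)) (𝓝[<] a)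

/-- Total variation of `f` over `[0,∞)`, including `|f 0|` (the paper's convention `Var`). -/
def totalVar (f : ℝ≥0 → ℝ) : ℝ≥0∞ := (‖f 0‖₊ : ℝ≥0∞) + eVariationOn f Set.univ

/-- The process `M` stopped at the (possibly infinite) random time `T`. -/
def stopped (M : ℝ≥0 → Ω → ℝ) (T : Ω → ℝ≥0∞) : ℝ≥0 → Ω → ℝ :=
  fun t ω => M (((t : ℝ≥0∞) ⊓ T ω).toNNReal) ω

section WithMeasurableSpace

variable [m : MeasurableSpace Ω]

/-- `Ḡ(t) = 1 - G(t) = P(γ > t)`. -/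
def Gbar (μ : Measure Ω) (γ : Ω → ℝ≥0∞) (t : ℝ≥0) : ℝ :=
  (μ {ω | (t : ℝ≥0∞) < γ ω}).toReal

/-- `Ḡ(t-) = P(γ ≥ t)`, the left-hand limit of `Ḡ` at `t`. -/
def GbarLeft (μ : Measure Ω) (γ : Ω → ℝ≥0∞) (t : ℝ≥0) : ℝ :=
  (μ {ω | (t : ℝ≥0∞) ≤ γ ω}).toReal

/-- `t_G = sup {t ∈ ℝ₊ : G(t) < 1}`, the right endpoint of the law of `γ`. -/
def tG (μ : Measure Ω) (γ : Ω → ℝ≥0∞) : ℝ≥0∞ :=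
  sSup ((fun t : ℝ≥0 => (t : ℝ≥0∞)) '' {t : ℝ≥0 | μ {ω | γ ω ≤ (t : ℝ≥0∞)} < 1})

/-- `𝒯 = {t ∈ ℝ₊ : P(γ ≥ t) > 0}`. -/
def TT (μ : Measure Ω) (γ : Ω → ℝ≥0∞) : Set ℝ≥0 :=
  {t | 0 < μ {ω | (t : ℝ≥0∞) ≤ γ ω}}

/-- Case A: `P(γ = t_G < ∞) = 0`. -/
def CaseA (μ : Measure Ω) (γ : Ω → ℝ≥0∞) : Prop :=
  μ {ω | γ ω = tG μ γ ∧ tG μ γ < ⊤} = 0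

/-- Case B: `P(γ = t_G < ∞) > 0`. -/
def CaseB (μ : Measure Ω) (γ : Ω → ℝ≥0∞) : Prop :=
  0 < μ {ω | γ ω = tG μ γ ∧ tG μ γ < ⊤}

/-- `z ∈ L¹_loc(dG)` : `z` is Borel and `∫_{[0,t]} |z(s)| dG(s) < ∞` for every `t ∈ 𝒯`,
where `dG` is the law of `γ` (a measure on `[0,∞]`). -/
def MemL1loc (μ : Measure Ω) (γ : Ω → ℝ≥0∞) (z : ℝ≥0 → ℝ) : Prop :=
  Measurable z ∧ ∀ t ∈ TT μ γ,
    IntegrableOn (fun x : ℝ≥0∞ => z x.toNNReal) (Icc 0 (t : ℝ≥0∞)) (μ.map γ)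

/-- `F loc≪ G` with density `z = dF/dG` : `F(t) = F(0) + ∫_(0,t] z(s) dG(s)` for `t < t_G`. -/
def LocAC (μ : Measure Ω) (γ : Ω → ℝ≥0∞) (F z : ℝ≥0 → ℝ) : Prop :=
  MemL1loc μ γ z ∧ ∀ t : ℝ≥0, (t : ℝ≥0∞) < tG μ γ →
    F t = F 0 + ∫ x in Ioc (0 : ℝ≥0∞) (t : ℝ≥0∞), z x.toNNReal ∂(μ.map γ)

/-- Condition M for the pair `(F, H)`. -/
def CondM (μ : Measure Ω) (γ : Ω → ℝ≥0∞) (F H : ℝ≥0 → ℝ) : Prop :=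
  (∃ z, LocAC μ γ F z) ∧ MemL1loc μ γ H ∧
  (∀ t : ℝ≥0, (t : ℝ≥0∞) < tG μ γ →
    F t * Gbar μ γ t + ∫ x in Ioc (0 : ℝ≥0∞) (t : ℝ≥0∞), H x.toNNReal ∂(μ.map γ)
      = F 0 * Gbar μ γ 0) ∧
  (CaseB μ γ → Tendsto F (leftF (tG μ γ)) (𝓝 (H (tG μ γ).toNNReal)))

/-- A stopping time of the single jump filtration: `{T ≤ t} ∈ 𝒻_t` for all `t ∈ ℝ₊`. -/
def IsSJStoppingTime (γ : Ω → ℝ≥0∞) (T : Ω → ℝ≥0∞) : Prop :=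
  ∀ t : ℝ≥0, {ω | T ω ≤ (t : ℝ≥0∞)} ∈ jumpColl m γ t

/-- The martingale property on a set `S` of times, w.r.t. the single jump filtration. -/
def MartingaleOn (μ : Measure Ω) (γ : Ω → ℝ≥0∞) (M : ℝ≥0 → Ω → ℝ) (S : Set ℝ≥0) : Prop :=
  (∀ t ∈ S, Measurable[jumpσ m γ t] (M t)) ∧ (∀ t ∈ S, Integrable (M t) μ) ∧
    ∀ s ∈ S, ∀ t ∈ S, s ≤ t → μ[M t|jumpσ m γ s] =ᵐ[μ] M s

/-- A uniformly integrable martingale w.r.t. the single jump filtration. -/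
def UIMartingale (μ : Measure Ω) (γ : Ω → ℝ≥0∞) (M : ℝ≥0 → Ω → ℝ) : Prop :=
  MartingaleOn μ γ M Set.univ ∧ UniformIntegrable M 1 μ

/-- A local martingale w.r.t. the single jump filtration: adapted, a.s. càdlàg paths, and
there are stopping times `T n ↑ ∞` a.s. with each stopped process a UI martingale. -/
def LocalMartingale (μ : Measure Ω) (γ : Ω → ℝ≥0∞) (M : ℝ≥0 → Ω → ℝ) : Prop :=
  (∀ t : ℝ≥0, Measurable[jumpσ m γ t] (M t)) ∧
  (∀ᵐ ω ∂μ, Cadlag fun t => M t ω) ∧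
  ∃ T : ℕ → Ω → ℝ≥0∞,
    (∀ n, IsSJStoppingTime γ (T n)) ∧
    (∀ᵐ ω ∂μ, Monotone (fun n => T n ω) ∧ Tendsto (fun n => T n ω) atTop (𝓝 (⊤ : ℝ≥0∞))) ∧
    ∀ n, UIMartingale μ γ (stopped M (T n))

/-- `E[L' | γ] = 0` for a (possibly only locally integrable) random variable `L'`. -/
def CondZeroGivenGamma (μ : Measure Ω) (γ : Ω → ℝ≥0∞) (L' : Ω → ℝ) : Prop :=
  ∀ B : Set ℝ≥0∞, MeasurableSet B → IntegrableOn L' (γ ⁻¹' B) μ →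
    ∫ ω in γ ⁻¹' B, L' ω ∂μ = 0

end WithMeasurableSpace

end SingleJump

namespace MeasureTheory

section Triangle

variable {α : Type*} [TopologicalSpace α] [LinearOrder α] [OrderClosedTopology α]
  [MeasurableSpace α] [BorelSpace α] {ν : Measure α} {ζ : α → ℝ} {a t : α}

theorem setIntegral_indicator_Iic_of_le {s : α} (hs : s ≤ t) :
    ∫ u in Ioc a t, (Iic s).indicator ζ u ∂ν = ∫ u in Ioc a s, ζ u ∂ν := by
  rw [integral_indicator measurableSet_Iic, Measure.restrict_restrict measurableSet_Iic,
    Iic_inter_Ioc_of_le hs]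

theorem setIntegral_indicator_Ici_const {u : α} (hu : u ∈ Ioc a t) (c : ℝ) :
    ∫ s in Ioc a t, (Ici u).indicator (fun _ => c) s ∂ν = ν.real (Icc u t) * c := by
  rw [integral_indicator measurableSet_Ici, Measure.restrict_restrict measurableSet_Ici,
    setIntegral_const, smul_eq_mul]
  congr 2
  ext x
  simp only [mem_inter_iff, mem_Ici, mem_Ioc, mem_Icc]
  exact ⟨fun h => ⟨h.1, h.2.2⟩, fun h => ⟨h.1, hu.1.trans_le h.1, h.2⟩⟩

variable [SecondCountableTopology α] [IsFiniteMeasure ν]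

theorem integrable_indicator_Iic_prod (hζ : IntegrableOn ζ (Ioc a t) ν) :
    Integrable (fun p : α × α => (Iic p.1).indicator ζ p.2)
      ((ν.restrict (Ioc a t)).prod (ν.restrict (Ioc a t))) :=
  (hζ.comp_snd _).indicator (measurableSet_le measurable_snd measurable_fst)

theorem integrableOn_setIntegral_Ioc (hζ : IntegrableOn ζ (Ioc a t) ν) :
    IntegrableOn (fun x => ∫ u in Ioc a x, ζ u ∂ν) (Ioc a t) ν :=
  IntegrableOn.congr_fun (integrable_indicator_Iic_prod hζ).integral_prod_left
    (fun _ hx => setIntegral_indicator_Iic_of_le hx.2) measurableSet_Ioc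

theorem setIntegral_setIntegral_Ioc (hζ : IntegrableOn ζ (Ioc a t) ν) :
    ∫ x in Ioc a t, ∫ u in Ioc a x, ζ u ∂ν ∂ν = ∫ u in Ioc a t, ν.real (Icc u t) * ζ u ∂ν :=
  calc ∫ x in Ioc a t, ∫ u in Ioc a x, ζ u ∂ν ∂ν
      = ∫ x in Ioc a t, ∫ u in Ioc a t, (Iic x).indicator ζ u ∂ν ∂ν :=
        setIntegral_congr_fun measurableSet_Ioc fun _ hx =>
          (setIntegral_indicator_Iic_of_le hx.2).symm
    _ = ∫ u in Ioc a t, ∫ x in Ioc a t, (Ici u).indicator (fun _ => ζ u) x ∂ν ∂ν :=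
        integral_integral_swap (integrable_indicator_Iic_prod hζ)
    _ = ∫ u in Ioc a t, ν.real (Icc u t) * ζ u ∂ν :=
        setIntegral_congr_fun measurableSet_Ioc fun _ hu =>
          setIntegral_indicator_Ici_const hu _

theorem setIntegral_Ioc_sub_measureReal_Ici_mul {f : α → ℝ} {c : ℝ}
    (hζ : IntegrableOn ζ (Ioc a t) ν) (hf : ∀ x ∈ Ioc a t, f x = c + ∫ u in Ioc a x, ζ u ∂ν) :
    ∫ x in Ioc a t, (f x - ν.real (Ici x) * ζ x) ∂ν
      = c * ν.real (Ioc a t) - ν.real (Ioi t) * ∫ u in Ioc a t, ζ u ∂ν := by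
  have hf_int : IntegrableOn f (Ioc a t) ν :=
    ((integrableOn_const (C := c)).add (integrableOn_setIntegral_Ioc hζ)).congr_fun
      (fun x hx => (hf x hx).symm) measurableSet_Ioc
  have hbound : ∀ s : Set α, ‖ν.real s‖ ≤ ν.real univ := fun s => by
    rw [Real.norm_of_nonneg measureReal_nonneg]; exact measureReal_mono (subset_univ s)
  have hIci_int : IntegrableOn (fun x => ν.real (Ici x) * ζ x) (Ioc a t) ν :=
    hζ.bdd_mul (Antitone.measurable fun _ _ h =>
      measureReal_mono (Ici_subset_Ici.2 h)).aestronglyMeasurable (ae_of_all _ fun _ => hbound _)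
  have hIcc_int : IntegrableOn (fun x => ν.real (Icc x t) * ζ x) (Ioc a t) ν :=
    hζ.bdd_mul (Antitone.measurable fun _ _ h =>
      measureReal_mono (Icc_subset_Icc_left h)).aestronglyMeasurable (ae_of_all _ fun _ => hbound _)
  have htail : ∀ x ∈ Ioc a t,
      ν.real (Icc x t) * ζ x - ν.real (Ici x) * ζ x = -(ν.real (Ioi t) * ζ x) := by
    intro x hx
    have hdisj : Disjoint (Icc x t) (Ioi t) :=
      disjoint_left.2 fun _ hy hy' => not_lt.2 hy.2 hy'
    rw [← Icc_union_Ioi_eq_Ici hx.2, measureReal_union hdisj measurableSet_Ioi]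
    ring
  calc ∫ x in Ioc a t, (f x - ν.real (Ici x) * ζ x) ∂ν
      = ∫ x in Ioc a t, (c + ∫ u in Ioc a x, ζ u ∂ν) ∂ν
          - ∫ x in Ioc a t, ν.real (Ici x) * ζ x ∂ν := by
        rw [integral_sub hf_int hIci_int, setIntegral_congr_fun measurableSet_Ioc hf]
    _ = c * ν.real (Ioc a t)
          + ∫ x in Ioc a t, (ν.real (Icc x t) * ζ x - ν.real (Ici x) * ζ x) ∂ν := by
        rw [integral_add (integrableOn_const (C := c)) (integrableOn_setIntegral_Ioc hζ),
          setIntegral_const, setIntegral_setIntegral_Ioc hζ, integral_sub hIcc_int hIci_int,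
          smul_eq_mul, mul_comm]
        ring
    _ = c * ν.real (Ioc a t) - ν.real (Ioi t) * ∫ u in Ioc a t, ζ u ∂ν := by
        rw [setIntegral_congr_fun measurableSet_Ioc htail, integral_neg, integral_const_mul]
        ring

end Triangle

section AeOfIntegrals

variable {α : Type*} [TopologicalSpace α] [LinearOrder α] [OrderTopology α]
  [MeasurableSpace α] {ν : Measure α} {a : α}

theorem ae_restrict_Ioc_eq_zero_of_setIntegral_Ioc [SecondCountableTopology α] [BorelSpace α]
    {D : α → ℝ} {t : α} (hD : IntegrableOn D (Ioc a t) ν)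
    (h : ∀ x ≤ t, ∫ y in Ioc a x, D y ∂ν = 0) : ∀ᵐ x ∂ν.restrict (Ioc a t), D x = 0 := by
  have h_sets : ∀ s, MeasurableSet s → ∫ x in s, D x ∂ν.restrict (Ioc a t) = 0 := by
    intro s hs
    induction s, hs using MeasurableSpace.induction_on_inter
      (BorelSpace.measurable_eq.trans (borel_eq_generateFrom_Iic α)) isPiSystem_Iic with
    | empty => simp
    | basic _ hs =>
      obtain ⟨x, rfl⟩ := hs
      rw [Measure.restrict_restrict measurableSet_Iic, inter_comm, Ioc_inter_Iic]
      exact h _ inf_le_left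
    | compl s hs ih => rw [setIntegral_compl hs hD, ih, h t le_rfl, sub_zero]
    | iUnion f hdisj hf ih => simp [integral_iUnion hf hdisj hD.integrableOn, ih]
  exact hD.ae_eq_zero_of_forall_setIntegral_eq_zero fun s hs _ => h_sets s hs

theorem ae_restrict_Ioo_of_forall_ae_restrict_Ioc [DenselyOrdered α]
    [TopologicalSpace.SeparableSpace α]
    {p : α → Prop} {b : α} (h : ∀ s < b, ∀ᵐ x ∂ν.restrict (Ioc a s), p x) :
    ∀ᵐ x ∂ν.restrict (Ioo a b), p x := by
  obtain ⟨S, hSc, hSd⟩ := TopologicalSpace.exists_countable_dense α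
  have hcover : Ioo a b ⊆ ⋃ s ∈ S ∩ Iio b, Ioc a s := fun x hx => by
    obtain ⟨s, hs, hxs, hsb⟩ := hSd.exists_between hx.2
    exact mem_biUnion ⟨hs, hsb⟩ ⟨hx.1, hxs.le⟩
  exact ae_restrict_of_ae_restrict_of_subset hcover
    ((ae_restrict_biUnion_iff _ (hSc.mono inter_subset_left) p).2 fun s hs => h s hs.2)

end AeOfIntegrals

end MeasureTheory

namespace SingleJump

variable {Ω : Type*}

section WithMeasurableSpace

variable [m : MeasurableSpace Ω] {μ : Measure Ω} {γ : Ω → ℝ≥0∞}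

/-- The paper's `H = F - Ḡ(·-) dF/dG`. -/
def canonicalH (μ : Measure Ω) (γ : Ω → ℝ≥0∞) (F z : ℝ≥0 → ℝ) (t : ℝ≥0) : ℝ :=
  F t - GbarLeft μ γ t * z t

theorem Gbar_eq_map (hγ : Measurable γ) (t : ℝ≥0) : Gbar μ γ t = (μ.map γ).real (Ioi ↑t) := by
  rw [measureReal_def, Measure.map_apply hγ measurableSet_Ioi]; rfl

theorem GbarLeft_eq_map (hγ : Measurable γ) (t : ℝ≥0) :
    GbarLeft μ γ t = (μ.map γ).real (Ici ↑t) := by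
  rw [measureReal_def, Measure.map_apply hγ measurableSet_Ici]; rfl

theorem measurable_GbarLeft [IsFiniteMeasure μ] : Measurable (GbarLeft μ γ) :=
  Antitone.measurable fun _ _ h => measureReal_mono fun _ hω => (ENNReal.coe_le_coe.2 h).trans hω

theorem abs_GbarLeft_le_one [IsProbabilityMeasure μ] (t : ℝ≥0) : |GbarLeft μ γ t| ≤ 1 := by
  change |μ.real _| ≤ 1
  rw [abs_of_nonneg measureReal_nonneg]; exact measureReal_le_one

theorem measure_lt_pos_of_lt_tG [IsProbabilityMeasure μ] {t : ℝ≥0} (ht : (t : ℝ≥0∞) < tG μ γ) :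
    0 < μ {ω | (t : ℝ≥0∞) < γ ω} := by
  obtain ⟨_, ⟨s, hs, rfl⟩, hts⟩ := lt_sSup_iff.1 ht
  refine pos_iff_ne_zero.2 fun h0 => ?_
  have hcompl : μ {ω | γ ω ≤ (s : ℝ≥0∞)}ᶜ = 0 :=
    measure_mono_null (fun ω hω => hts.trans (not_le.1 hω)) h0
  have := measure_univ_le_add_compl (μ := μ) {ω | γ ω ≤ (s : ℝ≥0∞)}
  rw [hcompl, add_zero, measure_univ] at this
  exact hs.not_ge this

theorem mem_TT_of_lt_tG [IsProbabilityMeasure μ] {t : ℝ≥0} (ht : (t : ℝ≥0∞) < tG μ γ) :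
    t ∈ TT μ γ :=
  (measure_lt_pos_of_lt_tG ht).trans_le (measure_mono (ofPred_subset_ofPred.2 fun _ => le_of_lt))

theorem le_tG_of_mem_TT [IsProbabilityMeasure μ] (hγ : Measurable γ) {t : ℝ≥0}
    (ht : t ∈ TT μ γ) : (t : ℝ≥0∞) ≤ tG μ γ := by
  by_contra! h
  obtain ⟨r, hr, hrt⟩ := ENNReal.lt_iff_exists_nnreal_btwn.1 h
  have hr_one : μ {ω | γ ω ≤ (r : ℝ≥0∞)} = 1 :=
    le_antisymm prob_le_one (not_lt.1 fun hlt => hr.not_ge (le_sSup ⟨r, hlt, rfl⟩))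
  have hcompl : μ {ω | γ ω ≤ (r : ℝ≥0∞)}ᶜ = 0 :=
    (prob_compl_eq_zero_iff (hγ measurableSet_Iic)).2 hr_one
  exact ht.ne' (measure_mono_null (fun ω hω => not_le.2 (hrt.trans_le hω)) hcompl)

variable {F z : ℝ≥0 → ℝ}

theorem LocAC.eq_add_setIntegral (hz : LocAC μ γ F z) {x : ℝ≥0∞} (hx : x < tG μ γ) :
    F x.toNNReal = F 0 + ∫ u in Ioc 0 x, z u.toNNReal ∂(μ.map γ) := by
  have hx_coe : ((x.toNNReal : ℝ≥0) : ℝ≥0∞) = x := ENNReal.coe_toNNReal (ne_top_of_lt hx)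
  rw [hz.2 x.toNNReal (hx_coe ▸ hx), hx_coe]

theorem LocAC.integrableOn_canonicalH [IsProbabilityMeasure μ] (hz : LocAC μ γ F z) {t : ℝ≥0}
    (ht : t ∈ TT μ γ) :
    IntegrableOn (fun x => canonicalH μ γ F z x.toNNReal) (Ioc 0 ↑t ∩ Iio (tG μ γ)) (μ.map γ) := by
  have hζ := hz.1.2 t ht
  have hF : IntegrableOn (fun x => F x.toNNReal) (Ioc 0 ↑t ∩ Iio (tG μ γ)) (μ.map γ) :=
    (((integrableOn_const (C := F 0)).add
      (integrableOn_setIntegral_Ioc (hζ.mono_set Ioc_subset_Icc_self))).mono_set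
      inter_subset_left).congr_fun (fun x hx => (hz.eq_add_setIntegral hx.2).symm)
      (measurableSet_Ioc.inter measurableSet_Iio)
  have hGz : IntegrableOn (fun x => GbarLeft μ γ x.toNNReal * z x.toNNReal) (Icc 0 ↑t) (μ.map γ) :=
    hζ.bdd_mul (measurable_GbarLeft.comp ENNReal.measurable_toNNReal).aestronglyMeasurable
      (ae_of_all _ fun _ => abs_GbarLeft_le_one _)
  exact hF.sub (hGz.mono_set fun x hx => Ioc_subset_Icc_self hx.1)

theorem LocAC.setIntegral_canonicalH [IsProbabilityMeasure μ] (hγ : Measurable γ)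
    (hz : LocAC μ γ F z) {t : ℝ≥0} (ht : (t : ℝ≥0∞) < tG μ γ) :
    ∫ x in Ioc 0 ↑t, canonicalH μ γ F z x.toNNReal ∂(μ.map γ)
      = F 0 * Gbar μ γ 0 - F t * Gbar μ γ t := by
  have hζ := (hz.1.2 t (mem_TT_of_lt_tG ht)).mono_set Ioc_subset_Icc_self
  have hH : ∀ x ∈ Ioc (0 : ℝ≥0∞) t,
      canonicalH μ γ F z x.toNNReal = F x.toNNReal - (μ.map γ).real (Ici x) * z x.toNNReal :=
    fun x hx => by
      rw [canonicalH, GbarLeft_eq_map hγ, ENNReal.coe_toNNReal (ne_top_of_le_ne_top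
        ENNReal.coe_ne_top hx.2)]
  have hdisj : Disjoint (Ioc (0 : ℝ≥0∞) t) (Ioi ↑t) :=
    disjoint_left.2 fun _ hx hx' => not_lt.2 hx.2 hx'
  rw [setIntegral_congr_fun measurableSet_Ioc hH, setIntegral_Ioc_sub_measureReal_Ici_mul hζ
    fun x hx => hz.eq_add_setIntegral (hx.2.trans_lt ht), Gbar_eq_map hγ, Gbar_eq_map hγ,
    hz.2 t ht, ENNReal.coe_zero, ← Ioc_union_Ioi_eq_Ioi (zero_le : (0 : ℝ≥0∞) ≤ t),
    measureReal_union hdisj measurableSet_Ioi]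
  ring

theorem condM_of_eqOn_canonicalH [IsProbabilityMeasure μ] (hγ : Measurable γ)
    (hz : LocAC μ γ F z) {H : ℝ≥0 → ℝ} (hHm : Measurable H)
    (hH : EqOn (fun x => H x.toNNReal) (fun x => canonicalH μ γ F z x.toNNReal) (Ioo 0 (tG μ γ)))
    (hB : CaseB μ γ → Tendsto F (leftF (tG μ γ)) (𝓝 (H (tG μ γ).toNNReal))) :
    CondM μ γ F H := by
  refine ⟨⟨z, hz⟩, ⟨hHm, fun t ht => ?_⟩, fun t ht => ?_, hB⟩
  · have hcover : Icc 0 (t : ℝ≥0∞) ⊆ {0} ∪ {↑t} ∪ Ioc 0 ↑t ∩ Iio (tG μ γ) := by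
      intro x ⟨_, hxt⟩
      rcases eq_or_ne x 0 with rfl | hx0
      · exact Or.inl (Or.inl rfl)
      rcases hxt.eq_or_lt with rfl | hxt
      · exact Or.inl (Or.inr rfl)
      exact Or.inr ⟨⟨pos_iff_ne_zero.2 hx0, hxt.le⟩, hxt.trans_le (le_tG_of_mem_TT hγ ht)⟩
    refine IntegrableOn.mono_set (((integrableOn_singleton).union integrableOn_singleton).union ?_)
      hcover
    exact (hz.integrableOn_canonicalH ht).congr_fun (fun x hx => (hH ⟨hx.1.1, hx.2⟩).symm)
      (measurableSet_Ioc.inter measurableSet_Iio)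
  · rw [setIntegral_congr_fun measurableSet_Ioc fun x hx => hH ⟨hx.1, hx.2.trans_lt ht⟩,
      hz.setIntegral_canonicalH hγ ht]
    ring

theorem CondM.ae_eq_canonicalH [IsProbabilityMeasure μ] (hγ : Measurable γ)
    (hz : LocAC μ γ F z) {H : ℝ≥0 → ℝ} (hM : CondM μ γ F H) :
    ∀ᵐ x ∂((μ.map γ).restrict (Ioo 0 (tG μ γ))), H x.toNNReal = canonicalH μ γ F z x.toNNReal := by
  refine ae_restrict_Ioo_of_forall_ae_restrict_Ioc fun s hs => ?_
  lift s to ℝ≥0 using ne_top_of_lt hs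
  have hs_TT := mem_TT_of_lt_tG hs
  have hH_int : IntegrableOn (fun x => H x.toNNReal) (Ioc 0 ↑s) (μ.map γ) :=
    (hM.2.1.2 s hs_TT).mono_set Ioc_subset_Icc_self
  have hV_int : IntegrableOn (fun x => canonicalH μ γ F z x.toNNReal) (Ioc 0 ↑s) (μ.map γ) :=
    (hz.integrableOn_canonicalH hs_TT).mono_set fun x hx => ⟨hx, hx.2.trans_lt hs⟩
  have h_zero : ∀ x ≤ (s : ℝ≥0∞),
      ∫ y in Ioc 0 x, (H y.toNNReal - canonicalH μ γ F z y.toNNReal) ∂(μ.map γ) = 0 := by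
    intro x hxs
    lift x to ℝ≥0 using ne_top_of_le_ne_top ENNReal.coe_ne_top hxs
    have hxt := hxs.trans_lt hs
    have hIoc : Ioc (0 : ℝ≥0∞) x ⊆ Ioc 0 s := Ioc_subset_Ioc_right hxs
    rw [integral_sub (hH_int.mono_set hIoc) (hV_int.mono_set hIoc),
      hz.setIntegral_canonicalH hγ hxt]
    linarith [hM.2.2.1 x hxt]
  filter_upwards [ae_restrict_Ioc_eq_zero_of_setIntegral_Ioc (hH_int.sub hV_int) h_zero]
    with x hx using sub_eq_zero.1 hx

theorem stmt_8_general (μ : Measure Ω) [IsProbabilityMeasure μ] (γ : Ω → ℝ≥0∞)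
    (hγ : Measurable γ)
    (F z : ℝ≥0 → ℝ) (hz : LocAC μ γ F z) :
    (∀ H : ℝ≥0 → ℝ, Measurable H →
      (∀ t : ℝ≥0, 0 < t → (t : ℝ≥0∞) < tG μ γ →
        H t = F t - GbarLeft μ γ t * z t) →
      (CaseB μ γ → Tendsto F (leftF (tG μ γ)) (𝓝 (H (tG μ γ).toNNReal))) →
      CondM μ γ F H) ∧
    (∀ H : ℝ≥0 → ℝ, CondM μ γ F H →
      (∀ᵐ x ∂((μ.map γ).restrict (Ioo 0 (tG μ γ))),
        H x.toNNReal = F x.toNNReal - GbarLeft μ γ x.toNNReal * z x.toNNReal) ∧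
      (CaseB μ γ → Tendsto F (leftF (tG μ γ)) (𝓝 (H (tG μ γ).toNNReal)))) := by
  refine ⟨fun H hHm hH hB => condM_of_eqOn_canonicalH hγ hz hHm (fun x hx => ?_) hB,
    fun H hM => ⟨hM.ae_eq_canonicalH hγ hz, hM.2.2.2⟩⟩
  have hx_coe : ((x.toNNReal : ℝ≥0) : ℝ≥0∞) = x := ENNReal.coe_toNNReal (ne_top_of_lt hx.2)
  exact hH x.toNNReal (ENNReal.toNNReal_pos hx.1.ne' (ne_top_of_lt hx.2)) (hx_coe ▸ hx.2)

/-- **Proposition 3 (b).** Given `F loc≪ G` with density `z = dF/dG`, any `H` with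
`H(t) = F(t) − Ḡ(t−) z(t)` for `0 < t < t_G` (with `H(0)` arbitrary, `H(t_G)` arbitrary in
Case A and `H(t_G) = lim_{t↑t_G} F(t)` in Case B) makes `(F,H)` satisfy Condition M; and
conversely, if `(F,H)` satisfies Condition M then `H(t) = F(t) − Ḡ(t−) z(t)` for `dG`-a.e.
`0 < t < t_G` and, in Case B, `H(t_G) = lim_{t↑t_G} F(t)`. -/
theorem stmt_8 (μ : Measure Ω) [IsProbabilityMeasure μ] (γ : Ω → ℝ≥0∞)
    (hγ : Measurable γ) (hpos : 0 < μ {ω | 0 < γ ω})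
    (F z : ℝ≥0 → ℝ) (hz : LocAC μ γ F z) :
    (∀ H : ℝ≥0 → ℝ, Measurable H →
      (∀ t : ℝ≥0, 0 < t → (t : ℝ≥0∞) < tG μ γ →
        H t = F t - GbarLeft μ γ t * z t) →
      (CaseB μ γ → Tendsto F (leftF (tG μ γ)) (𝓝 (H (tG μ γ).toNNReal))) →
      CondM μ γ F H) ∧
    (∀ H : ℝ≥0 → ℝ, CondM μ γ F H →
      (∀ᵐ x ∂((μ.map γ).restrict (Ioo 0 (tG μ γ))),
        H x.toNNReal = F x.toNNReal - GbarLeft μ γ x.toNNReal * z x.toNNReal) ∧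
      (CaseB μ γ → Tendsto F (leftF (tG μ γ)) (𝓝 (H (tG μ γ).toNNReal)))) :=
  stmt_8_general μ γ hγ F z hz

end WithMeasurableSpace

end SingleJump
end
end

section
/- In Case B, the local martingale M has integrable total variation: E(Var(M)_∞) < ∞. -/
/-! In Case B the endpoint `t_G` is finite, `γ ≤ t_G` a.s. and `t_G ∈ 𝒯`, so the local
integrability conditions at `t_G` are global ones. A path of `M` follows `F` up to `γ` and is then
constant, so its total variation is at most
`2 (|F 0| + ∫_(0,t_G] |dF/dG| dG + |H γ| + |L'|)`, an integrable bound. -/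

open MeasureTheory Filter Set Topology
open scoped ENNReal NNReal Classical

noncomputable section

namespace SingleJump

variable {Ω : Type*}

section WithMeasurableSpace

variable [m : MeasurableSpace Ω]

section Variation

variable {α E : Type*} [LinearOrder α] [PseudoEMetricSpace E]

theorem eVariationOn_le_of_potential {f : α → E} {s : Set α} (Φ : α → ℝ≥0∞) {K : ℝ≥0∞}
    (hΦK : ∀ t ∈ s, Φ t ≤ K)
    (hΦ : ∀ u ∈ s, ∀ v ∈ s, u ≤ v → Φ u + edist (f v) (f u) ≤ Φ v) :
    eVariationOn f s ≤ K := by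
  refine iSup_le fun ⟨n, u, hu, hus⟩ => ?_
  have hsum : ∀ m : ℕ, ∑ i ∈ Finset.range m, edist (f (u (i + 1))) (f (u i)) ≤ Φ (u m) := by
    intro m
    induction m with
    | zero => simp
    | succ m ih =>
      rw [Finset.sum_range_succ]
      exact (add_le_add_left ih _).trans (hΦ _ (hus m) _ (hus (m + 1)) (hu m.le_succ))
  exact (hsum n).trans (hΦK _ (hus n))

theorem eVariationOn_piecewise_const_le [OrderBot α] {s : Set α} [DecidablePred (· ∈ s)]
    (hs : IsLowerSet s) (f : α → E) (c : E) :
    eVariationOn (s.piecewise f fun _ => c) univ ≤ 2 * eVariationOn f s + edist c (f ⊥) := by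
  set K := 2 * eVariationOn f s + edist c (f ⊥)
  refine eVariationOn_le_of_potential
    (fun t => if t ∈ s then eVariationOn f (Iic t) else K) (fun t _ => ?_) ?_
  · split_ifs with ht
    · calc eVariationOn f (Iic t) ≤ eVariationOn f s := eVariationOn.mono f (hs.Iic_subset ht)
        _ ≤ 2 * eVariationOn f s := le_mul_of_one_le_left' one_le_two
        _ ≤ K := le_self_add
    · exact le_rfl
  · intro u _ v _ huv
    by_cases hv : v ∈ s
    · have hu : u ∈ s := hs huv hv
      simp only [if_pos hu, if_pos hv, piecewise_eq_of_mem _ _ _ hu, piecewise_eq_of_mem _ _ _ hv]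
      calc eVariationOn f (Iic u) + edist (f v) (f u)
          ≤ eVariationOn f (Iic u) + eVariationOn f (Icc u v) := by
            gcongr
            exact eVariationOn.edist_le f (right_mem_Icc.2 huv) (left_mem_Icc.2 huv)
        _ ≤ eVariationOn f (Iic u ∪ Icc u v) :=
            eVariationOn.add_le_union f fun x hx y hy => le_trans hx hy.1
        _ = eVariationOn f (Iic v) := by rw [Iic_union_Icc_eq_Iic huv]
    by_cases hu : u ∈ s
    · simp only [if_pos hu, if_neg hv, piecewise_eq_of_mem _ _ _ hu,
        piecewise_eq_of_notMem _ _ _ hv]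
      have hbot : ⊥ ∈ s := hs bot_le hu
      calc eVariationOn f (Iic u) + edist c (f u)
          ≤ eVariationOn f s + (edist c (f ⊥) + eVariationOn f s) := by
            gcongr
            · exact eVariationOn.mono f (hs.Iic_subset hu)
            · calc edist c (f u) ≤ edist c (f ⊥) + edist (f ⊥) (f u) := edist_triangle _ _ _
                _ ≤ edist c (f ⊥) + eVariationOn f s := by
                  gcongr
                  exact eVariationOn.edist_le f hbot hu
        _ = K := by ring
    · simp [hu, hv]

end Variation

theorem totalVar_ite_le (F : ℝ≥0 → ℝ) (a : ℝ≥0∞) (c : ℝ) :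
    totalVar (fun t : ℝ≥0 => if (t : ℝ≥0∞) < a then F t else c)
      ≤ 2 * (‖F 0‖ₑ + eVariationOn F {t | (t : ℝ≥0∞) < a} + ‖c‖ₑ) := by
  have hs : IsLowerSet {t : ℝ≥0 | (t : ℝ≥0∞) < a} :=
    fun x y hxy hy => (ENNReal.coe_le_coe.2 hxy).trans_lt hy
  have hvar : eVariationOn (fun t : ℝ≥0 => if (t : ℝ≥0∞) < a then F t else c) univ
      ≤ 2 * eVariationOn F {t | (t : ℝ≥0∞) < a} + edist c (F ⊥) :=
    eVariationOn_piecewise_const_le hs F c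
  have hstart : ‖(if ((0 : ℝ≥0) : ℝ≥0∞) < a then F 0 else c)‖ₑ ≤ ‖F 0‖ₑ + ‖c‖ₑ := by
    split_ifs
    exacts [le_self_add, le_add_self]
  have hjump : edist c (F ⊥) ≤ ‖c‖ₑ + ‖F 0‖ₑ := by
    rw [bot_eq_zero, edist_eq_enorm_sub]
    exact enorm_sub_le
  calc totalVar (fun t : ℝ≥0 => if (t : ℝ≥0∞) < a then F t else c)
      ≤ (‖F 0‖ₑ + ‖c‖ₑ) + (2 * eVariationOn F {t | (t : ℝ≥0∞) < a} + (‖c‖ₑ + ‖F 0‖ₑ)) :=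
        add_le_add hstart (hvar.trans (by gcongr))
    _ = 2 * (‖F 0‖ₑ + eVariationOn F {t | (t : ℝ≥0∞) < a} + ‖c‖ₑ) := by ring

theorem eVariationOn_le_lintegral_of_eq_integral {ν : Measure ℝ≥0∞} {F : ℝ≥0 → ℝ}
    {g : ℝ≥0∞ → ℝ} {b : ℝ≥0∞} (hg : IntegrableOn g (Ioc 0 b) ν)
    (hF : ∀ t : ℝ≥0, (t : ℝ≥0∞) < b → F t = F 0 + ∫ x in Ioc 0 (t : ℝ≥0∞), g x ∂ν) :
    eVariationOn F {t | (t : ℝ≥0∞) < b} ≤ ∫⁻ x in Ioc 0 b, ‖g x‖ₑ ∂ν := by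
  refine eVariationOn_le_of_potential (fun t : ℝ≥0 => ∫⁻ x in Ioc 0 (t : ℝ≥0∞), ‖g x‖ₑ ∂ν)
    (fun t ht => lintegral_mono_set (Ioc_subset_Ioc_right (le_of_lt ht))) ?_
  intro u hu v hv huv
  have hsplit : Ioc 0 (u : ℝ≥0∞) ∪ Ioc (u : ℝ≥0∞) v = Ioc 0 (v : ℝ≥0∞) :=
    Ioc_union_Ioc_eq_Ioc zero_le (ENNReal.coe_le_coe.2 huv)
  have hdisj : Disjoint (Ioc 0 (u : ℝ≥0∞)) (Ioc (u : ℝ≥0∞) v) := Ioc_disjoint_Ioc_of_le le_rfl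
  have hsub : Ioc 0 (v : ℝ≥0∞) ⊆ Ioc 0 b := Ioc_subset_Ioc_right (le_of_lt hv)
  have hincr : F v - F u = ∫ x in Ioc (u : ℝ≥0∞) v, g x ∂ν := by
    rw [hF v hv, hF u hu, ← hsplit, setIntegral_union hdisj measurableSet_Ioc
      (hg.mono_set (hsplit ▸ subset_union_left |>.trans hsub))
      (hg.mono_set (hsplit ▸ subset_union_right |>.trans hsub))]
    ring
  calc ∫⁻ x in Ioc 0 (u : ℝ≥0∞), ‖g x‖ₑ ∂ν + edist (F v) (F u)
      ≤ ∫⁻ x in Ioc 0 (u : ℝ≥0∞), ‖g x‖ₑ ∂ν + ∫⁻ x in Ioc (u : ℝ≥0∞) v, ‖g x‖ₑ ∂ν := by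
        rw [edist_eq_enorm_sub, hincr]
        gcongr
        exact enorm_integral_le_lintegral_enorm _
    _ = ∫⁻ x in Ioc 0 (v : ℝ≥0∞), ‖g x‖ₑ ∂ν := by
        rw [← lintegral_union measurableSet_Ioc hdisj, hsplit]

theorem lintegral_const_add_enorm_add_enorm_lt_top {μ : Measure Ω} [IsFiniteMeasure μ]
    {C : ℝ≥0∞} (hC : C ≠ ⊤) {f g : Ω → ℝ} (hf : Integrable f μ) (hg : Integrable g μ) :
    ∫⁻ ω, C + (‖f ω‖ₑ + ‖g ω‖ₑ) ∂μ < ⊤ := by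
  rw [lintegral_add_left measurable_const, lintegral_const,
    lintegral_add_left' hf.aemeasurable.enorm]
  exact ENNReal.add_lt_top.2 ⟨ENNReal.mul_lt_top hC.lt_top (measure_lt_top μ univ),
    ENNReal.add_lt_top.2 ⟨hf.2, hg.2⟩⟩

section LawOfGamma

variable {μ : Measure Ω} {γ : Ω → ℝ≥0∞}

theorem ae_le_coe_of_tG_lt [IsProbabilityMeasure μ] (hγ : Measurable γ) {t : ℝ≥0}
    (ht : tG μ γ < t) :
    ∀ᵐ ω ∂μ, γ ω ≤ t := by
  rw [ae_iff_measure_eq (p := fun ω => γ ω ≤ t) (hγ measurableSet_Iic).nullMeasurableSet,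
    measure_univ]
  by_contra hne
  have htG : (t : ℝ≥0∞) ≤ tG μ γ := le_sSup ⟨t, prob_le_one.lt_of_ne hne, rfl⟩
  exact htG.not_gt ht

theorem ae_le_tG [IsProbabilityMeasure μ] (hγ : Measurable γ) : ∀ᵐ ω ∂μ, γ ω ≤ tG μ γ := by
  have hrat : ∀ᵐ ω ∂μ, ∀ q : ℚ, tG μ γ < (q : ℝ).toNNReal → γ ω ≤ (q : ℝ).toNNReal := by
    refine ae_all_iff.2 fun q => ?_
    by_cases hq : tG μ γ < (q : ℝ).toNNReal
    · exact (ae_le_coe_of_tG_lt hγ hq).mono fun ω hω _ => hω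
    · exact Eventually.of_forall fun ω h => absurd h hq
  filter_upwards [hrat] with ω hω
  by_contra hlt
  obtain ⟨q, -, htq, hqγ⟩ := ENNReal.lt_iff_exists_rat_btwn.1 (not_le.1 hlt)
  exact (hω q htq).not_gt hqγ

theorem MemL1loc.integrable_comp {H : ℝ≥0 → ℝ} (hH : MemL1loc μ γ H) (hγ : Measurable γ)
    {t : ℝ≥0} (ht : t ∈ TT μ γ) (hγt : ∀ᵐ ω ∂μ, γ ω ≤ t) :
    Integrable (fun ω => H (γ ω).toNNReal) μ := by
  have hint := hH.2 t ht
  have hmem : ∀ᵐ x ∂μ.map γ, x ∈ Icc 0 (t : ℝ≥0∞) :=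
    (ae_map_iff hγ.aemeasurable measurableSet_Icc).2 (hγt.mono fun ω hω => ⟨zero_le, hω⟩)
  rw [IntegrableOn, Measure.restrict_eq_self_of_ae_mem hmem] at hint
  exact (integrable_map_measure hint.1 hγ.aemeasurable).1 hint

theorem CaseB.tG_ne_top (hB : CaseB μ γ) : tG μ γ ≠ ⊤ :=
  (nonempty_of_measure_ne_zero hB.ne').some_mem.2.ne

theorem CaseB.toNNReal_tG_mem_TT (hB : CaseB μ γ) : (tG μ γ).toNNReal ∈ TT μ γ :=
  hB.trans_le <| measure_mono fun ω hω =>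
    show ((tG μ γ).toNNReal : ℝ≥0∞) ≤ γ ω by rw [ENNReal.coe_toNNReal hB.tG_ne_top, hω.1]

theorem LocAC.eVariationOn_ne_top {F z : ℝ≥0 → ℝ} (hB : CaseB μ γ) (hF : LocAC μ γ F z) :
    eVariationOn F {t | (t : ℝ≥0∞) < tG μ γ} ≠ ⊤ := by
  have hz : IntegrableOn (fun x => z x.toNNReal) (Ioc 0 (tG μ γ)) (μ.map γ) := by
    rw [← ENNReal.coe_toNNReal hB.tG_ne_top]
    exact (hF.1.2 _ hB.toNNReal_tG_mem_TT).mono_set Ioc_subset_Icc_self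
  exact ne_top_of_le_ne_top hz.2.ne (eVariationOn_le_lintegral_of_eq_integral hz hF.2)

end LawOfGamma

theorem stmt_11_general
(μ : Measure Ω) [IsProbabilityMeasure μ] (γ : Ω → ℝ≥0∞)
    (hγ : Measurable γ)
    (M : ℝ≥0 → Ω → ℝ) (F H : ℝ≥0 → ℝ) (L' : Ω → ℝ)
    (hFH : CondM μ γ F H)
    (hL'int : ∀ t ∈ TT μ γ,
      Integrable (fun ω => ({ω' | γ ω' ≤ (t : ℝ≥0∞)}.indicator L') ω) μ)
    (hrepr : ∀ᵐ ω ∂μ, ∀ t : ℝ≥0,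
      M t ω = if (t : ℝ≥0∞) < γ ω then F t else H (γ ω).toNNReal + L' ω)
    (hB : CaseB μ γ) :
    ∫⁻ ω, totalVar (fun t => M t ω) ∂μ < ⊤ := by
  obtain ⟨⟨z, hF⟩, hH, -, -⟩ := hFH
  set s := (tG μ γ).toNNReal
  have hs : (s : ℝ≥0∞) = tG μ γ := ENNReal.coe_toNNReal hB.tG_ne_top
  have hγs : ∀ᵐ ω ∂μ, γ ω ≤ s := hs ▸ ae_le_tG hγ
  have hL' : Integrable L' μ := (hL'int s hB.toNNReal_tG_mem_TT).congr <|
    hγs.mono fun ω hω => indicator_of_mem (show ω ∈ {ω' | γ ω' ≤ s} from hω) L'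
  set V := eVariationOn F {t | (t : ℝ≥0∞) < tG μ γ}
  have hV : V ≠ ⊤ := hF.eVariationOn_ne_top hB
  have hpath : ∀ᵐ ω ∂μ, totalVar (fun t => M t ω)
      ≤ 2 * ((‖F 0‖ₑ + V) + (‖H (γ ω).toNNReal‖ₑ + ‖L' ω‖ₑ)) := by
    filter_upwards [hrepr, ae_le_tG hγ] with ω hMω hγω
    rw [show (fun t => M t ω) = _ from funext hMω]
    refine (totalVar_ite_le F (γ ω) _).trans ?_
    gcongr
    · exact eVariationOn.mono F fun t ht => lt_of_lt_of_le ht hγω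
    · exact enorm_add_le _ _
  calc ∫⁻ ω, totalVar (fun t => M t ω) ∂μ
      ≤ ∫⁻ ω, 2 * ((‖F 0‖ₑ + V) + (‖H (γ ω).toNNReal‖ₑ + ‖L' ω‖ₑ)) ∂μ := lintegral_mono_ae hpath
    _ < ⊤ := by
      rw [lintegral_const_mul' _ _ ENNReal.ofNat_ne_top]
      exact ENNReal.mul_lt_top ENNReal.ofNat_lt_top <|
        lintegral_const_add_enorm_add_enorm_lt_top (by finiteness)
          (hH.integrable_comp hγ hB.toNNReal_tG_mem_TT hγs) hL'

/-- **Theorem 5, Case B.** In Case B the local martingale `M` has integrable total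
variation: `E(Var(M)_∞) < ∞`. -/
theorem stmt_11
(μ : Measure Ω) [IsProbabilityMeasure μ] (γ : Ω → ℝ≥0∞)
    (hγ : Measurable γ) (hpos : 0 < μ {ω | 0 < γ ω})
    (M : ℝ≥0 → Ω → ℝ) (F H : ℝ≥0 → ℝ) (L' : Ω → ℝ)
    (hM : LocalMartingale μ γ M)
    (hFH : CondM μ γ F H)
    (hL'meas : Measurable L')
    (hL'int : ∀ t ∈ TT μ γ,
      Integrable (fun ω => ({ω' | γ ω' ≤ (t : ℝ≥0∞)}.indicator L') ω) μ)
    (hL'cond : CondZeroGivenGamma μ γ L')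
    (hrepr : ∀ᵐ ω ∂μ, ∀ t : ℝ≥0,
      M t ω = if (t : ℝ≥0∞) < γ ω then F t else H (γ ω).toNNReal + L' ω)
    (hB : CaseB μ γ) :
    ∫⁻ ω, totalVar (fun t => M t ω) ∂μ < ⊤ :=
  stmt_11_general μ γ hγ M F H L' hFH hL'int hrepr hB

end WithMeasurableSpace

end SingleJump
end
end
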